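/- Assume f : ℝ^d → ℝ is measurable and satisfies conditions (0.1) and (0.2). Then c := inf_{θ ∈ ℝ^d} E(f²(G) e^{−θ·G + |θ|²/2}) > 0, the Hessian of v^f satisfies ∇²v^f(θ) ⪰ c I_d for every θ ∈ ℝ^d (so v^f is strongly convex), and v^f(θ) → +∞ as |θ| → +∞; consequently there exists a unique θ_⋆^f ∈ ℝ^d such that v^f(θ_⋆^f) = inf_{θ ∈ ℝ^d} v^f(θ). -/

import Mathlib

open MeasureTheory ProbabilityTheory Filter Real Topology

noncomputable section

/-- Euclidean norm on `ℝ^k`. -/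
def nrm {k : ℕ} (x : Fin k → ℝ) : ℝ := Real.sqrt (∑ i, x i ^ 2)

/-- Euclidean inner (dot) product on `ℝ^k`. -/
def dot {k : ℕ} (x y : Fin k → ℝ) : ℝ := ∑ i, x i * y i

/-- The standard Gaussian measure on `ℝ^d`. -/
def stdGaussian (d : ℕ) : Measure (Fin d → ℝ) :=
  MeasureTheory.Measure.pi fun _ => ProbabilityTheory.gaussianReal 0 1

/-- `v^f(θ) = E(f²(G) e^{-θ·G + |θ|²/2})`. -/
def vF {d : ℕ} (f : (Fin d → ℝ) → ℝ) (θ : Fin d → ℝ) : ℝ :=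
  ∫ x, f x ^ 2 * Real.exp (-(dot θ x) + nrm θ ^ 2 / 2) ∂ stdGaussian d

/-- `v^{f,A}(ϑ) = v^f(Aϑ)`. -/
def vFA {d d' : ℕ} (A : Matrix (Fin d) (Fin d') ℝ) (f : (Fin d → ℝ) → ℝ)
    (ϑ : Fin d' → ℝ) : ℝ :=
  vF f (A.mulVec ϑ)

/-- The sample average approximation `v_n^{f,A}`. -/
def vnFA {d d' : ℕ} {Ω : Type*} (Gs : ℕ → Ω → Fin d → ℝ)
    (A : Matrix (Fin d) (Fin d') ℝ) (f : (Fin d → ℝ) → ℝ) (n : ℕ) (ω : Ω)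
    (ϑ : Fin d' → ℝ) : ℝ :=
  (1 / n : ℝ) * ∑ i ∈ Finset.range n,
    f (Gs i ω) ^ 2 * Real.exp (-(dot (A.mulVec ϑ) (Gs i ω)) + nrm (A.mulVec ϑ) ^ 2 / 2)

/-- The importance sampling estimator `M_n(θ, g)`. -/
def Mn {d : ℕ} {Ω : Type*} (Gs : ℕ → Ω → Fin d → ℝ) (n : ℕ) (θ : Fin d → ℝ)
    (g : (Fin d → ℝ) → ℝ) (ω : Ω) : ℝ :=
  (1 / n : ℝ) * ∑ i ∈ Finset.range n,
    g (Gs i ω + θ) * Real.exp (-(dot θ (Gs i ω)) - nrm θ ^ 2 / 2)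

/-- The Hölder class `ℋ_α`. -/
def MemH {d : ℕ} (α : ℝ) (g : (Fin d → ℝ) → ℝ) : Prop :=
  ∃ β ∈ Set.Ico (0 : ℝ) 2, ∃ lam > (0 : ℝ),
    (∀ x, |g x| ≤ lam * Real.exp (nrm x ^ β)) ∧
    ∀ x y, |g x - g y| ≤ lam * Real.exp (max (nrm x ^ β) (nrm y ^ β)) * nrm (x - y) ^ α

/-- `𝒜`-monotonicity of a function on `ℝ^d` for a vector `𝒜 ∈ ℝ^d`. -/
def AMonotonic {d : ℕ} (𝒜 : Fin d → ℝ) (h : (Fin d → ℝ) → ℝ) : Prop :=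
  (∀ x, Monotone fun ϑ : ℝ => h (x + ϑ • 𝒜)) ∨ (∀ x, Antitone fun ϑ : ℝ => h (x + ϑ • 𝒜))

/-- The class `𝒱_𝒜`. -/
def MemV {d : ℕ} (𝒜 : Fin d → ℝ) (h : (Fin d → ℝ) → ℝ) : Prop :=
  ∃ g₁ g₂ : (Fin d → ℝ) → ℝ, h = g₁ + g₂ ∧ AMonotonic 𝒜 g₁ ∧ AMonotonic 𝒜 g₂ ∧
    ∃ lam > (0 : ℝ), ∃ β ∈ Set.Ico (0 : ℝ) 2,
      ∀ x, |g₁ x| ≤ lam * Real.exp (nrm x ^ β) ∧ |g₂ x| ≤ lam * Real.exp (nrm x ^ β)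

/-!
Write `v^f(θ) = e^{|θ|²/2} L(θ)` with `L(θ) = E[f²(G) e^{-θ·G}]`, a two-sided Laplace transform.
By (0.2) the measure `f²(G) dP` has exponential moments of all orders, and `e^{a Σ|x_i|}` is
dominated by a finite sum of exponentials `e^{σ·x}`, which gives the local domination needed to
differentiate `L` under the integral sign, twice. In a direction `u` this yields
`∂²_u v^f(θ) = e^{|θ|²/2} (E[f²(G) (θ·u - G·u)² e^{-θ·G}] + |u|² L(θ)) ≥ |u|² v^f(θ)`.
By (0.1) some set `{f² ≥ ε, |x| ≤ R}` has positive Gaussian measure, so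
`v^f(θ) ≥ κ e^{|θ|²/2 - R|θ|}`: the infimum is positive and `v^f` is coercive, hence attains its
minimum. Since `θ ↦ -θ·x + |θ|²/2` is strictly convex, so is `v^f`, and the minimizer is unique.
-/

section Dot

variable {d : ℕ}

lemma dot_eq_dotProduct (x y : Fin d → ℝ) : dot x y = dotProduct x y := rfl

lemma dot_comm (x y : Fin d → ℝ) : dot x y = dot y x := dotProduct_comm x y

lemma nrm_nonneg (x : Fin d → ℝ) : 0 ≤ nrm x := Real.sqrt_nonneg _

lemma nrm_sq (x : Fin d → ℝ) : nrm x ^ 2 = dot x x := by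
  rw [nrm, Real.sq_sqrt (Finset.sum_nonneg fun i _ => sq_nonneg _)]
  simp only [dot, sq]

lemma nrm_eq_norm_toLp (x : Fin d → ℝ) : nrm x = ‖WithLp.toLp 2 x‖ := by
  simp [nrm, EuclideanSpace.norm_eq, Real.norm_eq_abs, sq_abs]

lemma nrm_pos {x : Fin d → ℝ} (hx : x ≠ 0) : 0 < nrm x := by
  rw [nrm_eq_norm_toLp, norm_pos_iff]
  simpa using hx

lemma norm_le_nrm (x : Fin d → ℝ) : ‖x‖ ≤ nrm x := by
  rw [nrm_eq_norm_toLp]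
  exact (pi_norm_le_iff_of_nonneg (norm_nonneg _)).2 fun i =>
    (PiLp.norm_apply_le (WithLp.toLp 2 x) i).trans_eq' rfl

lemma continuous_nrm : Continuous (nrm : (Fin d → ℝ) → ℝ) := by
  unfold nrm; fun_prop

lemma dot_le_nrm_mul_nrm (x y : Fin d → ℝ) : dot x y ≤ nrm x * nrm y :=
  Real.sum_mul_le_sqrt_mul_sqrt _ _ _

lemma abs_dot_le_norm_mul_sum_abs (v x : Fin d → ℝ) : |dot v x| ≤ ‖v‖ * ∑ i, |x i| := by
  rw [Finset.mul_sum]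
  refine (Finset.abs_sum_le_sum_abs _ _).trans (Finset.sum_le_sum fun i _ => ?_)
  rw [abs_mul]
  exact mul_le_mul_of_nonneg_right (norm_le_pi_norm v i) (abs_nonneg _)

lemma continuous_dot_left (u : Fin d → ℝ) : Continuous fun x : Fin d → ℝ => dot x u :=
  continuous_finsetSum _ fun i _ => (continuous_apply i).mul continuous_const

lemma nrm_smul_add_smul_sq {a b : ℝ} (hab : a + b = 1) (p q : Fin d → ℝ) :
    nrm (a • p + b • q) ^ 2 = a * nrm p ^ 2 + b * nrm q ^ 2 - a * b * nrm (p - q) ^ 2 := by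
  simp only [nrm_sq, dot_eq_dotProduct, add_dotProduct, dotProduct_add, sub_dotProduct,
    dotProduct_sub, smul_dotProduct, dotProduct_smul, smul_eq_mul, dotProduct_comm q p]
  obtain rfl : b = 1 - a := by linarith
  ring

def dotCLM (x : Fin d → ℝ) : (Fin d → ℝ) →L[ℝ] ℝ :=
  ∑ i, x i • ContinuousLinearMap.proj (R := ℝ) (φ := fun _ : Fin d => ℝ) i

lemma dotCLM_apply (x y : Fin d → ℝ) : dotCLM x y = dot x y := by
  simp [dotCLM, dot]

lemma continuous_dotCLM : Continuous (dotCLM : (Fin d → ℝ) → (Fin d → ℝ) →L[ℝ] ℝ) :=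
  continuous_finsetSum _ fun i _ => (continuous_apply i).smul continuous_const

lemma norm_dotCLM_le (x : Fin d → ℝ) : ‖dotCLM x‖ ≤ ∑ i, |x i| :=
  ContinuousLinearMap.opNorm_le_bound _ (Finset.sum_nonneg fun i _ => abs_nonneg _) fun y => by
    rw [dotCLM_apply, dot_comm, Real.norm_eq_abs, mul_comm]
    exact abs_dot_le_norm_mul_sum_abs y x

lemma hasFDerivAt_dot_left (x θ : Fin d → ℝ) :
    HasFDerivAt (fun θ => dot θ x) (dotCLM x) θ := by
  convert (dotCLM x).hasFDerivAt (x := θ) using 1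
  funext θ
  rw [dotCLM_apply, dot_comm]

lemma hasFDerivAt_nrm_sq_div_two (θ : Fin d → ℝ) :
    HasFDerivAt (fun θ => nrm θ ^ 2 / 2) (dotCLM θ) θ := by
  have h : (fun θ : Fin d → ℝ => nrm θ ^ 2 / 2) = fun θ => ∑ i, θ i ^ 2 / 2 := by
    funext θ
    rw [nrm_sq, dot, Finset.sum_div]
    simp only [sq]
  rw [h, dotCLM]
  refine HasFDerivAt.fun_sum fun i _ => ?_
  have := ((hasDerivAt_pow 2 (θ i)).div_const 2).comp_hasFDerivAt (f := fun θ => θ i) θ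
    (hasFDerivAt_apply (𝕜 := ℝ) i θ)
  refine this.congr_fderiv ?_
  ext y
  simp

lemma exp_mul_sum_abs_le (a : ℝ) (x : Fin d → ℝ) :
    exp (a * ∑ i, |x i|) ≤ ∑ σ : Fin d → Bool, exp (dot (fun i => if σ i then a else -a) x) := by
  calc exp (a * ∑ i, |x i|) = ∏ i, exp (a * |x i|) := by rw [Finset.mul_sum, Real.exp_sum]
    _ ≤ ∏ i, ∑ s : Bool, exp ((if s then a else -a) * x i) := by
      refine Finset.prod_le_prod (fun i _ => (exp_pos _).le) fun i _ => ?_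
      rw [Fintype.sum_bool, if_pos rfl, if_neg Bool.false_ne_true]
      rcases abs_cases (x i) with ⟨h, _⟩ | ⟨h, _⟩
      · rw [h]; exact le_add_of_nonneg_right (exp_pos _).le
      · rw [h, mul_neg, ← neg_mul]; exact le_add_of_nonneg_left (exp_pos _).le
    _ = _ := by
      rw [Fintype.prod_sum]
      simp only [dot, Real.exp_sum]

end Dot

section Laplace

variable {d : ℕ} {μ : Measure (Fin d → ℝ)} {g : (Fin d → ℝ) → ℝ}

def ExpIntegrable (μ : Measure (Fin d → ℝ)) (g : (Fin d → ℝ) → ℝ) : Prop :=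
  ∀ θ, Integrable (fun x => g x * exp (-(dot θ x))) μ

def laplace (μ : Measure (Fin d → ℝ)) (g : (Fin d → ℝ) → ℝ) (θ : Fin d → ℝ) : ℝ :=
  ∫ x, g x * exp (-(dot θ x)) ∂μ

lemma ExpIntegrable.integrable_mul_exp_sum_abs (hg : ExpIntegrable μ g) (θ : Fin d → ℝ)
    (a : ℝ) : Integrable (fun x => g x * exp (-(dot θ x)) * exp (a * ∑ i, |x i|)) μ := by
  set ψ : (Fin d → Bool) → Fin d → ℝ := fun σ i => if σ i then a else -a
  refine (integrable_finsetSum Finset.univ fun σ _ => (hg (θ - ψ σ)).norm).mono'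
    ((hg θ).aestronglyMeasurable.mul (Continuous.aestronglyMeasurable (by fun_prop)))
    (Eventually.of_forall fun x => ?_)
  have hψ : ∀ σ, g x * exp (-(dot (θ - ψ σ) x)) = g x * exp (-(dot θ x)) * exp (dot (ψ σ) x) := by
    intro σ
    rw [mul_assoc, ← Real.exp_add, dot_eq_dotProduct, dot_eq_dotProduct, dot_eq_dotProduct,
      sub_dotProduct]
    ring_nf
  simp only [hψ, norm_mul, Real.norm_of_nonneg (exp_pos _).le, ← Finset.mul_sum]
  exact mul_le_mul_of_nonneg_left (exp_mul_sum_abs_le a x) (by positivity)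

lemma ExpIntegrable.mul_dot (hg : ExpIntegrable μ g) (u : Fin d → ℝ) :
    ExpIntegrable μ (fun x => g x * dot x u) := by
  intro θ
  have hdot : ∀ x, |dot x u| ≤ ‖u‖ * exp (∑ i, |x i|) := fun x =>
    (dot_comm x u ▸ abs_dot_le_norm_mul_sum_abs u x).trans
      (mul_le_mul_of_nonneg_left ((le_add_of_nonneg_right zero_le_one).trans
        (Real.add_one_le_exp _)) (norm_nonneg u))
  have hmeas : AEStronglyMeasurable (fun x => g x * dot x u * exp (-(dot θ x))) μ := by
    refine ((hg θ).aestronglyMeasurable.mul (continuous_dot_left u).aestronglyMeasurable).congr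
      (Eventually.of_forall fun x => ?_)
    simp only [Pi.mul_apply]
    ring
  refine ((hg.integrable_mul_exp_sum_abs θ 1).norm.const_mul ‖u‖).mono' hmeas
    (Eventually.of_forall fun x => ?_)
  simp only [norm_mul, Real.norm_eq_abs, one_mul, abs_of_pos (exp_pos _)]
  calc |g x| * |dot x u| * exp (-dot θ x)
      ≤ |g x| * (‖u‖ * exp (∑ i, |x i|)) * exp (-dot θ x) := by gcongr; exact hdot x
    _ = _ := by ring

lemma hasFDerivAt_mul_exp_neg_dot (c : ℝ) (x θ : Fin d → ℝ) :
    HasFDerivAt (fun θ => c * exp (-(dot θ x))) (-(c * exp (-(dot θ x))) • dotCLM x) θ := by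
  refine (((hasFDerivAt_dot_left x θ).neg.exp).const_mul c).congr_fderiv ?_
  simp only [Pi.neg_apply, smul_neg, smul_smul]
  exact (neg_smul _ _).symm

lemma neg_dot_le_of_mem_ball {θ₀ θ : Fin d → ℝ} (hθ : θ ∈ Metric.ball θ₀ 1) (x : Fin d → ℝ) :
    -(dot θ x) ≤ -(dot θ₀ x) + ∑ i, |x i| := by
  have hsplit : dot θ x = dot θ₀ x + dot (θ - θ₀) x := by
    simp only [dot_eq_dotProduct, sub_dotProduct]; ring
  have hnorm : ‖θ - θ₀‖ ≤ 1 := (mem_ball_iff_norm.1 hθ).le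
  have := (neg_le_abs _).trans ((abs_dot_le_norm_mul_sum_abs (θ - θ₀) x).trans
    (mul_le_of_le_one_left (Finset.sum_nonneg fun i _ => abs_nonneg (x i)) hnorm))
  linarith

lemma norm_fderiv_mul_exp_neg_dot_le {θ₀ θ : Fin d → ℝ} (hθ : θ ∈ Metric.ball θ₀ 1) (c : ℝ)
    (x : Fin d → ℝ) :
    ‖-(c * exp (-(dot θ x))) • dotCLM x‖ ≤ ‖c * exp (-(dot θ₀ x)) * exp (2 * ∑ i, |x i|)‖ := by
  set s := ∑ i, |x i|
  have hexp : exp (-(dot θ x)) ≤ exp (-(dot θ₀ x)) * exp s := by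
    rw [← Real.exp_add]; exact exp_le_exp.2 (neg_dot_le_of_mem_ball hθ x)
  have hs : ‖dotCLM x‖ ≤ exp s :=
    (norm_dotCLM_le x).trans ((le_add_of_nonneg_right zero_le_one).trans (Real.add_one_le_exp s))
  simp only [norm_smul, norm_neg, norm_mul, Real.norm_eq_abs, abs_of_pos (exp_pos _)]
  calc |c| * exp (-dot θ x) * ‖dotCLM x‖ ≤ |c| * (exp (-dot θ₀ x) * exp s) * exp s := by gcongr
    _ = |c| * exp (-dot θ₀ x) * exp (2 * s) := by rw [two_mul, Real.exp_add]; ring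

lemma hasFDerivAt_laplace (hg : ExpIntegrable μ g) (θ₀ : Fin d → ℝ) :
    HasFDerivAt (laplace μ g) (∫ x, -(g x * exp (-(dot θ₀ x))) • dotCLM x ∂μ) θ₀ :=
  hasFDerivAt_integral_of_dominated_of_fderiv_le (Metric.ball_mem_nhds θ₀ one_pos)
    (Eventually.of_forall fun θ => (hg θ).aestronglyMeasurable) (hg θ₀)
    ((hg θ₀).aestronglyMeasurable.neg.smul continuous_dotCLM.aestronglyMeasurable)
    (Eventually.of_forall fun x _ hθ => norm_fderiv_mul_exp_neg_dot_le hθ (g x) x)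
    (hg.integrable_mul_exp_sum_abs θ₀ 2).norm
    (Eventually.of_forall fun x θ _ => hasFDerivAt_mul_exp_neg_dot (g x) x θ)

lemma ExpIntegrable.integrable_fderiv_mul_exp_neg_dot (hg : ExpIntegrable μ g) (θ : Fin d → ℝ) :
    Integrable (fun x => -(g x * exp (-(dot θ x))) • dotCLM x) μ :=
  (hg.integrable_mul_exp_sum_abs θ 2).norm.mono'
    ((hg θ).aestronglyMeasurable.neg.smul continuous_dotCLM.aestronglyMeasurable)
    (Eventually.of_forall fun x =>
      norm_fderiv_mul_exp_neg_dot_le (Metric.mem_ball_self one_pos) (g x) x)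

lemma fderiv_laplace_apply (hg : ExpIntegrable μ g) (θ u : Fin d → ℝ) :
    fderiv ℝ (laplace μ g) θ u = -laplace μ (fun x => g x * dot x u) θ := by
  rw [(hasFDerivAt_laplace hg θ).fderiv,
    ContinuousLinearMap.integral_apply (hg.integrable_fderiv_mul_exp_neg_dot θ), laplace,
    ← integral_neg]
  congr 1
  funext x
  simp only [smul_apply, dotCLM_apply, smul_eq_mul]
  ring

lemma laplace_mul_sub_dot_sq (hg : ExpIntegrable μ g) (θ u : Fin d → ℝ) (c : ℝ) :
    laplace μ (fun x => g x * (c - dot x u) ^ 2) θ =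
      c ^ 2 * laplace μ g θ - 2 * c * laplace μ (fun x => g x * dot x u) θ +
        laplace μ (fun x => g x * dot x u * dot x u) θ := by
  have hexpand : (fun x => g x * (c - dot x u) ^ 2 * exp (-(dot θ x))) = fun x =>
      c ^ 2 * (g x * exp (-(dot θ x))) - 2 * c * (g x * dot x u * exp (-(dot θ x))) +
        g x * dot x u * dot x u * exp (-(dot θ x)) := by
    funext x; ring
  rw [laplace, hexpand, integral_add, integral_sub, integral_const_mul, integral_const_mul]
  · rfl
  · exact (hg θ).const_mul _
  · exact (hg.mul_dot u θ).const_mul _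
  · exact ((hg θ).const_mul _).sub ((hg.mul_dot u θ).const_mul _)
  · exact (hg.mul_dot u).mul_dot u θ

lemma continuous_laplace (hg : ExpIntegrable μ g) : Continuous (laplace μ g) :=
  continuous_iff_continuousAt.2 fun θ => (hasFDerivAt_laplace hg θ).continuousAt

lemma fderiv_exp_mul_laplace_apply (hg : ExpIntegrable μ g) (θ u : Fin d → ℝ) :
    fderiv ℝ (fun θ => exp (nrm θ ^ 2 / 2) * laplace μ g θ) θ u =
      exp (nrm θ ^ 2 / 2) * (dot θ u * laplace μ g θ - laplace μ (fun x => g x * dot x u) θ) := by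
  have hΦ : HasFDerivAt (fun θ => exp (nrm θ ^ 2 / 2) * laplace μ g θ) _ θ :=
    (hasFDerivAt_nrm_sq_div_two θ).exp.mul (hasFDerivAt_laplace hg θ).differentiableAt.hasFDerivAt
  rw [hΦ.fderiv]
  simp only [add_apply, smul_apply, smul_eq_mul, fderiv_laplace_apply hg, dotCLM_apply]
  ring

lemma fderiv_fderiv_exp_mul_laplace_apply (hg : ExpIntegrable μ g) (θ u : Fin d → ℝ) :
    fderiv ℝ (fun θ' => fderiv ℝ (fun θ => exp (nrm θ ^ 2 / 2) * laplace μ g θ) θ' u) θ u =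
      exp (nrm θ ^ 2 / 2) *
        (laplace μ (fun x => g x * (dot θ u - dot x u) ^ 2) θ + nrm u ^ 2 * laplace μ g θ) := by
  simp only [fderiv_exp_mul_laplace_apply hg]
  have hL : ∀ {h : (Fin d → ℝ) → ℝ}, ExpIntegrable μ h →
      HasFDerivAt (laplace μ h) (fderiv ℝ (laplace μ h) θ) θ :=
    fun hh => (hasFDerivAt_laplace hh θ).differentiableAt.hasFDerivAt
  have hΦ' : HasFDerivAt (fun θ' => exp (nrm θ' ^ 2 / 2) *
      (dot θ' u * laplace μ g θ' - laplace μ (fun x => g x * dot x u) θ')) _ θ :=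
    (hasFDerivAt_nrm_sq_div_two θ).exp.mul
      (((hasFDerivAt_dot_left u θ).mul (hL hg)).sub (hL (hg.mul_dot u)))
  rw [hΦ'.fderiv]
  simp only [add_apply, sub_apply, smul_apply, smul_eq_mul, fderiv_laplace_apply hg,
    fderiv_laplace_apply (hg.mul_dot u), dotCLM_apply, laplace_mul_sub_dot_sq hg, nrm_sq]
  ring

lemma exists_mul_exp_le_laplace [IsFiniteMeasure μ] (hgm : Measurable g) (hg0 : 0 ≤ g)
    (hpos : 0 < μ {x | g x ≠ 0}) (hg : ExpIntegrable μ g) :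
    ∃ κ > 0, ∃ R : ℝ, ∀ θ, κ * exp (-(R * nrm θ)) ≤ laplace μ g θ := by
  set A : ℕ → Set (Fin d → ℝ) := fun n => {x | ((n : ℝ) + 1)⁻¹ ≤ g x ∧ nrm x ≤ n}
  have hA : ∀ n, MeasurableSet (A n) := fun n =>
    (measurableSet_le measurable_const hgm).inter
      (measurableSet_le continuous_nrm.measurable measurable_const)
  have hcover : {x | g x ≠ 0} ⊆ ⋃ n, A n := by
    intro x hx
    have hgx : 0 < g x := (hg0 x).lt_of_ne' hx
    obtain ⟨n, hn⟩ := exists_nat_ge (max (g x)⁻¹ (nrm x))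
    refine Set.mem_iUnion.2 ⟨n, inv_le_of_inv_le₀ hgx ?_, (le_max_right _ _).trans hn⟩
    linarith [le_max_left (g x)⁻¹ (nrm x)]
  obtain ⟨n, hn⟩ := exists_measure_pos_of_not_measure_iUnion_null fun h =>
    hpos.ne' (measure_mono_null hcover h)
  have hAn : 0 < μ.real (A n) := ENNReal.toReal_pos hn.ne' (measure_ne_top _ _)
  refine ⟨((n : ℝ) + 1)⁻¹ * μ.real (A n), by positivity, n, fun θ => ?_⟩
  have hle : ∀ x ∈ A n, ((n : ℝ) + 1)⁻¹ * exp (-(n * nrm θ)) ≤ g x * exp (-(dot θ x)) := by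
    intro x hx
    have hdot : dot θ x ≤ n * nrm θ := (dot_le_nrm_mul_nrm θ x).trans
      (by nlinarith [nrm_nonneg θ, hx.2])
    exact mul_le_mul hx.1 (exp_le_exp.2 (neg_le_neg hdot)) (exp_pos _).le (hg0 x)
  calc ((n : ℝ) + 1)⁻¹ * μ.real (A n) * exp (-(n * nrm θ))
      = ((n : ℝ) + 1)⁻¹ * exp (-(n * nrm θ)) * μ.real (A n) := by ring
    _ ≤ ∫ x in A n, g x * exp (-(dot θ x)) ∂μ :=
      setIntegral_ge_of_const_le_real (hA n) (measure_ne_top _ _) hle (hg θ).integrableOn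
    _ ≤ laplace μ g θ :=
      setIntegral_le_integral (hg θ)
        (Eventually.of_forall fun x => mul_nonneg (hg0 x) (exp_pos _).le)

end Laplace

section VF

variable {d : ℕ} {f : (Fin d → ℝ) → ℝ}

instance : IsProbabilityMeasure (stdGaussian d) := by
  unfold _root_.stdGaussian; infer_instance

lemma vF_eq_exp_mul_laplace (f : (Fin d → ℝ) → ℝ) :
    vF f = fun θ => exp (nrm θ ^ 2 / 2) * laplace (stdGaussian d) (fun x => f x ^ 2) θ := by
  funext θ
  rw [vF, laplace, ← integral_const_mul]
  congr 1
  funext x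
  rw [exp_add]
  ring

lemma vF_nonneg (f : (Fin d → ℝ) → ℝ) (θ : Fin d → ℝ) : 0 ≤ vF f θ :=
  integral_nonneg fun x => by positivity

lemma continuous_vF (h02 : ExpIntegrable (stdGaussian d) fun x => f x ^ 2) :
    Continuous (vF f) := by
  rw [vF_eq_exp_mul_laplace]
  exact ((continuous_nrm.pow 2).div_const 2).rexp.mul (continuous_laplace h02)

lemma vF_mul_nrm_sq_le_fderiv_fderiv (h02 : ExpIntegrable (stdGaussian d) fun x => f x ^ 2)
    (θ u : Fin d → ℝ) :
    vF f θ * nrm u ^ 2 ≤ fderiv ℝ (fun θ' => fderiv ℝ (vF f) θ' u) θ u := by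
  rw [vF_eq_exp_mul_laplace, fderiv_fderiv_exp_mul_laplace_apply h02]
  have hvar : 0 ≤ laplace (stdGaussian d) (fun x => f x ^ 2 * (dot θ u - dot x u) ^ 2) θ :=
    integral_nonneg fun x => by positivity
  nlinarith [exp_pos (nrm θ ^ 2 / 2)]

lemma exists_mul_exp_le_vF (hf : Measurable f) (h01 : 0 < stdGaussian d {x | f x ≠ 0})
    (h02 : ExpIntegrable (stdGaussian d) fun x => f x ^ 2) :
    ∃ κ > 0, ∃ R : ℝ, ∀ θ, κ * exp (nrm θ ^ 2 / 2 - R * nrm θ) ≤ vF f θ := by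
  obtain ⟨κ, hκ, R, hR⟩ := exists_mul_exp_le_laplace (hf.pow_const 2) (fun x => sq_nonneg (f x))
    (by simpa using h01) h02
  refine ⟨κ, hκ, R, fun θ => ?_⟩
  rw [vF_eq_exp_mul_laplace, sub_eq_add_neg, exp_add, mul_left_comm]
  exact mul_le_mul_of_nonneg_left (hR θ) (exp_pos _).le

lemma exists_pos_le_vF (hf : Measurable f) (h01 : 0 < stdGaussian d {x | f x ≠ 0})
    (h02 : ExpIntegrable (stdGaussian d) fun x => f x ^ 2) :
    ∃ c > 0, ∀ θ, c ≤ vF f θ := by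
  obtain ⟨κ, hκ, R, hR⟩ := exists_mul_exp_le_vF hf h01 h02
  refine ⟨κ * exp (-(R ^ 2 / 2)), by positivity, fun θ => (hR θ).trans' ?_⟩
  gcongr
  nlinarith [sq_nonneg (nrm θ - R)]

lemma tendsto_vF_atTop (hf : Measurable f) (h01 : 0 < stdGaussian d {x | f x ≠ 0})
    (h02 : ExpIntegrable (stdGaussian d) fun x => f x ^ 2) {l : Filter (Fin d → ℝ)}
    (hl : Tendsto nrm l atTop) : Tendsto (vF f) l atTop := by
  obtain ⟨κ, hκ, R, hR⟩ := exists_mul_exp_le_vF hf h01 h02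
  have hquad : Tendsto (fun t : ℝ => t ^ 2 / 2 - R * t) atTop atTop := by
    refine (tendsto_id.atTop_mul_atTop₀
      (tendsto_atTop_add_const_right _ (-R) (tendsto_id.atTop_div_const two_pos))).congr
        fun t => ?_
    simp only [id]; ring
  exact tendsto_atTop_mono hR
    (((tendsto_exp_atTop.comp hquad).const_mul_atTop hκ).comp hl)

lemma integrable_vF_integrand (h02 : ExpIntegrable (stdGaussian d) fun x => f x ^ 2)
    (θ : Fin d → ℝ) :
    Integrable (fun x => f x ^ 2 * exp (-(dot θ x) + nrm θ ^ 2 / 2)) (stdGaussian d) :=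
  ((h02 θ).mul_const (exp (nrm θ ^ 2 / 2))).congr
    (Eventually.of_forall fun x => by simp only [exp_add]; ring)

lemma exp_tilt_smul_add_smul_le {a b : ℝ} (ha : 0 ≤ a) (hb : 0 ≤ b) (hab : a + b = 1)
    (p q x : Fin d → ℝ) :
    exp (-(dot (a • p + b • q) x) + nrm (a • p + b • q) ^ 2 / 2) ≤
      exp (-(a * b * nrm (p - q) ^ 2 / 2)) *
        (a * exp (-(dot p x) + nrm p ^ 2 / 2) + b * exp (-(dot q x) + nrm q ^ 2 / 2)) := by
  have hexponent : -(dot (a • p + b • q) x) + nrm (a • p + b • q) ^ 2 / 2 =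
      -(a * b * nrm (p - q) ^ 2 / 2) +
        (a * (-(dot p x) + nrm p ^ 2 / 2) + b * (-(dot q x) + nrm q ^ 2 / 2)) := by
    rw [nrm_smul_add_smul_sq hab]
    simp only [dot_eq_dotProduct, add_dotProduct, smul_dotProduct, smul_eq_mul]
    ring
  rw [hexponent, exp_add]
  gcongr
  exact convexOn_exp.2 (Set.mem_univ _) (Set.mem_univ _) ha hb hab

lemma vF_smul_add_smul_le (h02 : ExpIntegrable (stdGaussian d) fun x => f x ^ 2)
    {a b : ℝ} (ha : 0 ≤ a) (hb : 0 ≤ b) (hab : a + b = 1) (p q : Fin d → ℝ) :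
    vF f (a • p + b • q) ≤ exp (-(a * b * nrm (p - q) ^ 2 / 2)) * (a * vF f p + b * vF f q) := by
  have hp := (integrable_vF_integrand h02 p).const_mul a
  have hq := (integrable_vF_integrand h02 q).const_mul b
  rw [vF, vF, vF, ← integral_const_mul, ← integral_const_mul, ← integral_add hp hq,
    ← integral_const_mul]
  refine integral_mono (integrable_vF_integrand h02 _) ((hp.add hq).const_mul _) fun x => ?_
  calc f x ^ 2 * exp (-(dot (a • p + b • q) x) + nrm (a • p + b • q) ^ 2 / 2)
      ≤ f x ^ 2 * (exp (-(a * b * nrm (p - q) ^ 2 / 2)) *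
          (a * exp (-(dot p x) + nrm p ^ 2 / 2) + b * exp (-(dot q x) + nrm q ^ 2 / 2))) :=
        mul_le_mul_of_nonneg_left (exp_tilt_smul_add_smul_le ha hb hab p q x) (sq_nonneg _)
    _ = _ := by ring

lemma strictConvexOn_vF (hf : Measurable f) (h01 : 0 < stdGaussian d {x | f x ≠ 0})
    (h02 : ExpIntegrable (stdGaussian d) fun x => f x ^ 2) : StrictConvexOn ℝ Set.univ (vF f) := by
  obtain ⟨c, hc, hcV⟩ := exists_pos_le_vF hf h01 h02
  refine ⟨convex_univ, fun p _ q _ hpq a b ha hb hab => ?_⟩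
  have hmix : 0 < a * vF f p + b * vF f q :=
    add_pos (mul_pos ha (hc.trans_le (hcV p))) (mul_pos hb (hc.trans_le (hcV q)))
  have hgap : exp (-(a * b * nrm (p - q) ^ 2 / 2)) < 1 := by
    have := nrm_pos (sub_ne_zero.2 hpq)
    rw [Real.exp_lt_one_iff, neg_lt_zero]
    positivity
  exact (vF_smul_add_smul_le h02 ha.le hb.le hab p q).trans_lt (mul_lt_of_lt_one_left hmix hgap)

end VF

/-- Under (0.1) and (0.2), `c := inf_θ v^f(θ) > 0`, the Hessian of `v^f` dominates `c I_d`
(strong convexity), `v^f(θ) → ∞` as `|θ| → ∞`, and `v^f` has a unique minimizer. -/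
theorem stmt1 {d : ℕ} (f : (Fin d → ℝ) → ℝ) (hf : Measurable f)
    (h01 : 0 < stdGaussian d {x | f x ≠ 0})
    (h02 : ∀ θ : Fin d → ℝ,
      Integrable (fun x => f x ^ 2 * Real.exp (-(dot θ x))) (stdGaussian d)) :
    (0 < ⨅ θ : Fin d → ℝ, vF f θ) ∧
    (∀ θ u : Fin d → ℝ,
      (⨅ θ' : Fin d → ℝ, vF f θ') * nrm u ^ 2 ≤
        fderiv ℝ (fun θ' => fderiv ℝ (vF f) θ' u) θ u) ∧
    Tendsto (vF f) (Filter.comap nrm atTop) atTop ∧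
    (∃! θs : Fin d → ℝ, ∀ θ, vF f θs ≤ vF f θ) := by
  obtain ⟨c, hc, hcV⟩ := exists_pos_le_vF hf h01 h02
  have hbdd : BddBelow (Set.range (vF f)) := ⟨0, Set.forall_mem_range.2 (vF_nonneg f)⟩
  obtain ⟨θs, hθs⟩ := (continuous_vF h02).exists_forall_le
    (tendsto_vF_atTop hf h01 h02 (tendsto_atTop_mono norm_le_nrm tendsto_norm_cocompact_atTop))
  refine ⟨hc.trans_le (le_ciInf hcV), fun θ u => ?_, tendsto_vF_atTop hf h01 h02 tendsto_comap,
    θs, hθs, fun θ hθ => ?_⟩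
  · exact (mul_le_mul_of_nonneg_right (ciInf_le hbdd θ) (sq_nonneg _)).trans
      (vF_mul_nrm_sq_le_fderiv_fderiv h02 θ u)
  · exact (strictConvexOn_vF hf h01 h02).eq_of_isMinOn (fun y _ => hθ y) (fun y _ => hθs y)
      (Set.mem_univ _) (Set.mem_univ _)
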